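/- For every prime p, the inequality e_p ≤ (p + 1)·log α / (2·log p) holds, where e_p = ν_p(P_{z(p)}) and α = 1 + √2. -/

import Mathlib

/-!
Let `α = 1 + √2`, so that `α ^ n = Q n + P n √2` with `P n` and `Q n` coprime (the norm of `α` is
`-1`). For odd `p`, the Frobenius of `𝔽_p[√2]` (taken as `QuadraticAlgebra (ZMod p) 2 0`, a ring
whether or not `2` is a square mod `p`) gives `α ^ p = 1 + 2 ^ ((p - 1) / 2) √2 = 1 ± √2` by Euler's
criterion, so `α ^ (p - 1) = 1` or `α ^ (p + 1) = -1`, i.e. `p ∣ P (2m)` for some `2m ≤ p + 1`.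
Since `z p ∣ 2m`, `p ^ e_p` divides `P (2m) = 2 P m Q m`, hence by coprimality one of `P m`, `Q m`,
both of which are at most `α ^ m`. So `p ^ (2 e_p) ≤ α ^ (p + 1)`, which for `p = 2` follows from
`2 ^ e_2 ∣ P 2 = 2`.
-/

/-- The Pell sequence: `P 0 = 0`, `P 1 = 1`, `P (n+2) = 2 * P (n+1) + P n`. -/
def pell : ℕ → ℕ
  | 0 => 0
  | 1 => 1
  | n + 2 => 2 * pell (n + 1) + pell n

/-- The order of appearance of `n` in the Pell sequence: the smallest positive
integer `k` such that `n ∣ P k`. -/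
noncomputable def zAppear (n : ℕ) : ℕ := sInf {k : ℕ | 0 < k ∧ n ∣ pell k}

open QuadraticAlgebra Real

/-- `(1 + √2) ^ n = pellQ n + pell n * √2`; `pellQ n` is half the Pell–Lucas number. -/
def pellQ : ℕ → ℕ
  | 0 => 1
  | n + 1 => pellQ n + 2 * pell n

theorem pell_succ (n : ℕ) : pell (n + 1) = pellQ n + pell n := by
  induction n with
  | zero => rfl
  | succ n ih => rw [pell, pellQ]; omega

theorem pellQ_pos (n : ℕ) : 0 < pellQ n := by
  induction n with
  | zero => exact Nat.one_pos
  | succ n ih => rw [pellQ]; omega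

theorem pell_pos {n : ℕ} (hn : 0 < n) : 0 < pell n := by
  obtain ⟨n, rfl⟩ := Nat.exists_eq_add_one_of_ne_zero hn.ne'
  rw [pell_succ]
  exact Nat.add_pos_left (pellQ_pos n) _

theorem one_add_omega_pow {R : Type*} [CommSemiring R] (n : ℕ) :
    (1 + ω : QuadraticAlgebra R 2 0) ^ n = ⟨pellQ n, pell n⟩ := by
  induction n with
  | zero => ext <;> simp [pellQ, pell]
  | succ n ih =>
    rw [pow_succ, ih, pell_succ, pellQ]
    ext <;> simp

theorem pellQ_sq_sub_two_mul_pell_sq (n : ℕ) : (pellQ n : ℤ) ^ 2 - 2 * pell n ^ 2 = (-1) ^ n := by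
  have hnorm : QuadraticAlgebra.norm (1 + ω : QuadraticAlgebra ℤ 2 0) = -1 := rfl
  have h := congrArg QuadraticAlgebra.norm (one_add_omega_pow (R := ℤ) n)
  rw [map_pow, hnorm, norm_def] at h
  linear_combination -h

theorem pell_coprime_pellQ (n : ℕ) : (pell n).Coprime (pellQ n) := by
  rw [← Nat.isCoprime_iff_coprime]
  refine ⟨-2 * pell n * (-1) ^ n, pellQ n * (-1) ^ n, ?_⟩
  have hsq : ((-1 : ℤ) ^ n) ^ 2 = 1 := by rw [← pow_mul, mul_comm, pow_mul, neg_one_sq, one_pow]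
  linear_combination (-1) ^ n * pellQ_sq_sub_two_mul_pell_sq n + hsq

theorem pell_add (m n : ℕ) : pell (m + n) = pellQ m * pell n + pell m * pellQ n := by
  have h := congrArg QuadraticAlgebra.im (one_add_omega_pow (R := ℕ) (m + n))
  rw [pow_add, one_add_omega_pow, one_add_omega_pow] at h
  simpa [mul_comm] using h.symm

theorem pell_two_mul (m : ℕ) : pell (2 * m) = 2 * (pell m * pellQ m) := by
  rw [two_mul, pell_add]; ring

theorem pell_dvd_pell_of_dvd {m n : ℕ} (h : m ∣ n) : pell m ∣ pell n := by
  obtain ⟨k, rfl⟩ := h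
  induction k with
  | zero => exact dvd_zero _
  | succ k ih =>
    rw [Nat.mul_succ, pell_add]
    exact dvd_add (dvd_mul_left _ _) (ih.mul_right _)

theorem zAppear_le {d k : ℕ} (hk : 0 < k) (h : d ∣ pell k) : zAppear d ≤ k :=
  Nat.sInf_le ⟨hk, h⟩

theorem zAppear_pos_and_dvd_pell {d k : ℕ} (hk : 0 < k) (h : d ∣ pell k) :
    0 < zAppear d ∧ d ∣ pell (zAppear d) :=
  Nat.sInf_mem (s := {j | 0 < j ∧ d ∣ pell j}) ⟨k, hk, h⟩

theorem zAppear_dvd_of_dvd_pell {d k : ℕ} (h : d ∣ pell k) : zAppear d ∣ k := by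
  rcases Nat.eq_zero_or_pos k with rfl | hk
  · exact dvd_zero _
  obtain ⟨hz, hdz⟩ := zAppear_pos_and_dvd_pell hk h
  set z := zAppear d
  have hd : d ∣ pell (z * (k / z)) := hdz.trans (pell_dvd_pell_of_dvd (dvd_mul_right _ _))
  have hcop : d.Coprime (pellQ (z * (k / z))) := (pell_coprime_pellQ _).coprime_dvd_left hd
  have hr : d ∣ pell (k % z) := by
    have : d ∣ pellQ (k % z) * pell (z * (k / z)) + pell (k % z) * pellQ (z * (k / z)) := by
      rwa [← pell_add, Nat.mod_add_div]
    exact hcop.dvd_of_dvd_mul_right ((Nat.dvd_add_right (hd.mul_left _)).1 this)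
  by_contra hzk
  have hpos : 0 < k % z := Nat.pos_of_ne_zero fun h0 => hzk (Nat.dvd_of_mod_eq_zero h0)
  exact (Nat.mod_lt k hz).not_ge (zAppear_le hpos hr)

theorem prime_dvd_pell_sub_one_or_add_one {p : ℕ} (hp : p.Prime) (hp2 : p ≠ 2) :
    p ∣ pell (p - 1) ∨ p ∣ pell (p + 1) := by
  have := Fact.mk hp
  have : CharP (QuadraticAlgebra (ZMod p) 2 0) p :=
    charP_of_injective_algebraMap algebraMap_injective p
  set α : QuadraticAlgebra (ZMod p) 2 0 := 1 + ω
  have hdvd (n : ℕ) : p ∣ pell n ↔ (α ^ n).im = 0 := by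
    rw [one_add_omega_pow, ZMod.natCast_eq_zero_iff]
  have hω : (ω : QuadraticAlgebra (ZMod p) 2 0) ^ 2 = 2 := by ext <;> simp [sq]
  have hfrob : α ^ p = 1 + algebraMap (ZMod p) _ (2 ^ (p / 2)) * ω := by
    have hodd : 2 * (p / 2) + 1 = p := Nat.two_mul_div_two_add_one_of_odd (hp.odd_of_ne_two hp2)
    rw [add_pow_char, one_pow, map_pow, map_ofNat, ← hω, ← pow_mul, ← pow_succ, hodd]
  have h2 : (2 : ZMod p) ≠ 0 := fun h =>
    hp2 ((Nat.prime_dvd_prime_iff_eq hp Nat.prime_two).1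
      ((ZMod.natCast_eq_zero_iff 2 p).1 (by exact_mod_cast h)))
  rcases ZMod.pow_div_two_eq_neg_one_or_one p h2 with h | h
  · left
    have hunit : IsUnit α := IsUnit.of_mul_eq_one (ω - 1) (by ext <;> simp [α]; ring)
    have : α ^ (p - 1) * α = 1 * α := by
      rw [← pow_succ, Nat.sub_add_cancel hp.one_le, hfrob, h, map_one, one_mul, one_mul]
    rw [hdvd, hunit.mul_left_inj.1 this]
    rfl
  · right
    rw [hdvd, pow_succ, hfrob, h, map_neg, map_one]
    simp [α]

theorem pow_dvd_pell_or_pellQ_of_pow_dvd_pell_two_mul {p k m : ℕ} (hp : p.Prime) (hp2 : p ≠ 2)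
    (h : p ^ k ∣ pell (2 * m)) : p ^ k ∣ pell m ∨ p ^ k ∣ pellQ m := by
  rcases Nat.eq_zero_or_pos k with rfl | hk
  · simp
  rw [pell_two_mul] at h
  have hcop : (p ^ k).Coprime 2 := ((Nat.coprime_primes hp Nat.prime_two).2 hp2).pow_left k
  exact ((pell_coprime_pellQ m).isPrimePow_dvd_mul (hp.isPrimePow.pow hk.ne')).1
    (hcop.dvd_of_dvd_mul_left h)

theorem pellQ_add_pell_mul_sqrt_two (n : ℕ) : (pellQ n : ℝ) + pell n * √2 = (1 + √2) ^ n := by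
  induction n with
  | zero => simp [pell, pellQ]
  | succ n ih =>
    rw [pow_succ, ← ih, pell_succ, pellQ]
    push_cast
    linear_combination (-(pell n : ℝ)) * sq_sqrt (zero_le_two (α := ℝ))

theorem pell_le_pow (n : ℕ) : (pell n : ℝ) ≤ (1 + √2) ^ n := by
  rw [← pellQ_add_pell_mul_sqrt_two]
  nlinarith [one_lt_sqrt_two, (pellQ n).cast_nonneg (α := ℝ), (pell n).cast_nonneg (α := ℝ)]

theorem pellQ_le_pow (n : ℕ) : (pellQ n : ℝ) ≤ (1 + √2) ^ n := by
  rw [← pellQ_add_pell_mul_sqrt_two]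
  nlinarith [one_lt_sqrt_two, (pell n).cast_nonneg (α := ℝ)]

theorem pow_le_of_pow_dvd_pell_two_mul {p k m : ℕ} (hp : p.Prime) (hp2 : p ≠ 2) (hm : 0 < m)
    (h : p ^ k ∣ pell (2 * m)) : (p : ℝ) ^ k ≤ (1 + √2) ^ m := by
  rcases pow_dvd_pell_or_pellQ_of_pow_dvd_pell_two_mul hp hp2 h with h | h
  · exact le_trans (by exact_mod_cast Nat.le_of_dvd (pell_pos hm) h) (pell_le_pow m)
  · exact le_trans (by exact_mod_cast Nat.le_of_dvd (pellQ_pos m) h) (pellQ_le_pow m)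

theorem exists_dvd_pell_two_mul {p : ℕ} (hp : p.Prime) (hp2 : p ≠ 2) :
    ∃ m, 0 < m ∧ 2 * m ≤ p + 1 ∧ p ∣ pell (2 * m) := by
  have := hp.two_le
  have hodd : 2 * (p / 2) + 1 = p := Nat.two_mul_div_two_add_one_of_odd (hp.odd_of_ne_two hp2)
  rcases prime_dvd_pell_sub_one_or_add_one hp hp2 with h | h
  · exact ⟨p / 2, by omega, by omega, by rwa [show 2 * (p / 2) = p - 1 by omega]⟩
  · exact ⟨p / 2 + 1, by omega, by omega, by rwa [show 2 * (p / 2 + 1) = p + 1 by omega]⟩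

theorem sq_pow_padicValNat_pell_zAppear_le {p : ℕ} (hp : p.Prime) :
    ((p : ℝ) ^ padicValNat p (pell (zAppear p))) ^ 2 ≤ (1 + √2) ^ (p + 1) := by
  have hdvd {n : ℕ} (h : p ∣ pell n) : p ^ padicValNat p (pell (zAppear p)) ∣ pell n :=
    pow_padicValNat_dvd.trans (pell_dvd_pell_of_dvd (zAppear_dvd_of_dvd_pell h))
  have hα : 1 ≤ 1 + √2 := by linarith [one_lt_sqrt_two]
  by_cases hp2 : p = 2
  · subst hp2
    have h2 : 2 ^ padicValNat 2 (pell (zAppear 2)) ≤ 2 :=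
      Nat.le_of_dvd two_pos (hdvd (n := 2) dvd_rfl)
    calc ((2 : ℝ) ^ padicValNat 2 (pell (zAppear 2))) ^ 2 ≤ 2 ^ 2 := by gcongr; exact_mod_cast h2
      _ ≤ (1 + √2) ^ 2 := by gcongr; linarith [one_lt_sqrt_two]
      _ ≤ (1 + √2) ^ (2 + 1) := pow_le_pow_right₀ hα (by norm_num)
  · obtain ⟨m, hm, hmp, hpm⟩ := exists_dvd_pell_two_mul hp hp2
    calc ((p : ℝ) ^ padicValNat p (pell (zAppear p))) ^ 2 ≤ ((1 + √2) ^ m) ^ 2 := by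
          gcongr; exact pow_le_of_pow_dvd_pell_two_mul hp hp2 hm (hdvd hpm)
      _ = (1 + √2) ^ (2 * m) := by rw [← pow_mul, mul_comm]
      _ ≤ (1 + √2) ^ (p + 1) := pow_le_pow_right₀ hα hmp

/-- For every prime `p`, `e p ≤ (p + 1) log α / (2 log p)`, where
`e p = ν_p(P (z p))` and `α = 1 + √2`. -/
theorem e_p_bound (p : ℕ) (hp : p.Prime) :
    (padicValNat p (pell (zAppear p)) : ℝ) ≤
      ((p : ℝ) + 1) * Real.log (1 + Real.sqrt 2) / (2 * Real.log p) := by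
  have hlogp : 0 < log p := log_pos (by exact_mod_cast hp.one_lt)
  have hp0 : (0 : ℝ) < p := by exact_mod_cast hp.pos
  have h := log_le_log (by positivity) (sq_pow_padicValNat_pell_zAppear_le hp)
  rw [← pow_mul, log_pow, log_pow] at h
  rw [le_div_iff₀ (by positivity)]
  push_cast at h
  linarith
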